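/- There exist a constant C > 0 and an integer N such that for all n ≥ N, | Σ_{ℓ ∈ ℤ, |ℓ| < n/2, ℓ ≡ n (mod 2)} p_1(ℓ / n^{3/4}) − (n^{3/4}/2) ∫_{−∞}^{∞} p_1(t) dt | ≤ C n^{1/12}. -/

import Mathlib

/-!
Writing `ℓ = n - 2m`, the sum becomes `∑_{n/4 < m < 3n/4} F m` with
`F x = p1 (n / c - (2 / c) x)` and `c = n ^ (3/4)`. The function `F` is unimodal with maximum
`1` at `x = n / 2`, and for a unimodal function the sum over consecutive integers differs from the
integral over the same range by at most three times the maximum. The substitution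
`t = n / c - (2 / c) x` turns that integral into `(c / 2) ∫ p1` minus the two tails `|t| ≥ T` with
`T = n / (4c) = n^(1/4) / 4`, and `p1 t ≤ 12 t⁻⁴` bounds them by `(c / 2) · 8 / T³ = 256`.
The error is therefore `O(1)`, let alone `O(n^(1/12))`.
-/

open MeasureTheory

noncomputable def p1 (t : ℝ) : ℝ := Real.exp (-t ^ 4 / 12)

open Set

section SumIntegral

variable {f : ℝ → ℝ} {a b : ℕ}

theorem MonotoneOn.abs_intervalIntegral_sub_sum_Ico_le (hab : a ≤ b)
    (hf : MonotoneOn f (Icc a b)) :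
    |(∫ x in a..b, f x) - ∑ i ∈ Finset.Ico a b, f i| ≤ f b - f a := by
  have hshift :
      ∑ i ∈ Finset.Ico a b, f ↑(i + 1) = ∑ i ∈ Finset.Ico a b, f i + (f b - f a) := by
    rw [← Finset.sum_Ico_sub (f := fun i : ℕ => f i) hab, ← Finset.sum_add_distrib]
    simp
  have := hf.sum_le_integral_Ico hab
  have := hf.integral_le_sum_Ico hab
  rw [abs_le]
  constructor <;> linarith

theorem AntitoneOn.abs_intervalIntegral_sub_sum_Ico_le (hab : a ≤ b)
    (hf : AntitoneOn f (Icc a b)) :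
    |(∫ x in a..b, f x) - ∑ i ∈ Finset.Ico a b, f i| ≤ f a - f b := by
  have := hf.neg.abs_intervalIntegral_sub_sum_Ico_le hab
  rw [intervalIntegral.integral_neg, Finset.sum_neg_distrib, ← abs_neg] at this
  simpa [neg_add_eq_sub] using this

/-- Split at `k = ⌊p⌋₊`: each monotone piece costs at most `M`, and so does the unit interval
`[k, k + 1]` containing the peak. -/
theorem abs_intervalIntegral_sub_sum_Ico_le_of_unimodal {p M : ℝ}
    (hmono : MonotoneOn f (Iic p)) (hanti : AntitoneOn f (Ici p))
    (h0 : ∀ x, 0 ≤ f x) (hM : ∀ x, f x ≤ M) (hap : a ≤ p) (hpb : p < b) :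
    |(∫ x in a..b, f x) - ∑ i ∈ Finset.Ico a b, f i| ≤ 3 * M := by
  set k := ⌊p⌋₊
  have hp0 : 0 ≤ p := (Nat.cast_nonneg a).trans hap
  have hak : a ≤ k := Nat.le_floor hap
  have hkb : k < b := (Nat.floor_lt hp0).2 hpb
  have hkp : (k : ℝ) ≤ p := Nat.floor_le hp0
  have hpk : p ≤ (k + 1 : ℕ) := by push_cast; exact (Nat.lt_floor_add_one p).le
  have hmono' : MonotoneOn f (Icc a k) := hmono.mono fun x hx => hx.2.trans hkp
  have hanti' : AntitoneOn f (Icc (k + 1 : ℕ) b) := hanti.mono fun x hx => hpk.trans hx.1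
  have hleft : IntervalIntegrable f volume a k :=
    (hmono'.mono (uIcc_of_le (Nat.cast_le.2 hak)).le).intervalIntegrable
  have hright : IntervalIntegrable f volume (k + 1 : ℕ) b :=
    (hanti'.mono (uIcc_of_le (Nat.cast_le.2 hkb)).le).intervalIntegrable
  have hmid : IntervalIntegrable f volume k (k + 1 : ℕ) :=
    (hmono.mono fun x hx => ((uIcc_of_le hkp).le hx).2).intervalIntegrable.trans
      (hanti.mono fun x hx => ((uIcc_of_le hpk).le hx).1).intervalIntegrable
  have hsum : ∑ i ∈ Finset.Ico a b, f i =
      ∑ i ∈ Finset.Ico a k, f i + f k + ∑ i ∈ Finset.Ico (k + 1) b, f i := by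
    rw [← Finset.sum_Ico_consecutive _ hak hkb.le, Finset.sum_eq_sum_Ico_succ_bot hkb, add_assoc]
  have hint : ∫ x in a..b, f x =
      (∫ x in a..k, f x) + (∫ x in k..(k + 1 : ℕ), f x) + ∫ x in (k + 1 : ℕ)..b, f x := by
    rw [intervalIntegral.integral_add_adjacent_intervals hleft hmid,
      intervalIntegral.integral_add_adjacent_intervals (hleft.trans hmid) hright]
  have hL := hmono'.abs_intervalIntegral_sub_sum_Ico_le hak
  have hR := hanti'.abs_intervalIntegral_sub_sum_Ico_le hkb
  have hC : |(∫ x in k..(k + 1 : ℕ), f x) - f k| ≤ M := by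
    have hlen : ((k + 1 : ℕ) : ℝ) - k = 1 := by push_cast; ring
    have hlo : 0 ≤ ∫ x in k..(k + 1 : ℕ), f x :=
      intervalIntegral.integral_nonneg (by push_cast; linarith) fun x _ => h0 x
    have hhi : ∫ x in k..(k + 1 : ℕ), f x ≤ M := by
      simpa [hlen] using intervalIntegral.integral_mono_on (by push_cast; linarith) hmid
        intervalIntegrable_const fun x _ => hM x
    rw [abs_le]
    constructor <;> linarith [h0 k, hM k]
  rw [hsum, hint]
  calc _ = |((∫ x in a..k, f x) - ∑ i ∈ Finset.Ico a k, f i) +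
          ((∫ x in k..(k + 1 : ℕ), f x) - f k) +
          ((∫ x in (k + 1 : ℕ)..b, f x) - ∑ i ∈ Finset.Ico (k + 1) b, f i)| := by
        congr 1; ring
    _ ≤ M + M + M := (abs_add_three _ _ _).trans <| add_le_add_three
        (hL.trans (by linarith [h0 a, hM k])) hC (hR.trans (by linarith [h0 b, hM (k + 1 : ℕ)]))
    _ = 3 * M := by ring

end SumIntegral

theorem sum_filter_parity_eq_sum_Ico {β : Type*} [AddCommMonoid β] (n : ℕ) (g : ℤ → β) :
    ∑ ℓ ∈ (Finset.Ioo (-(n : ℤ)) n).filter (fun ℓ : ℤ => 2 * |ℓ| < n ∧ ℓ % 2 = n % 2), g ℓ =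
      ∑ m ∈ Finset.Ico (n / 4 + 1) ((3 * n + 3) / 4), g (n - 2 * m) := by
  refine (Finset.sum_nbij' (fun m : ℕ => (n : ℤ) - 2 * m) (fun ℓ : ℤ => ((n - ℓ) / 2).toNat)
    ?_ ?_ ?_ ?_ fun _ _ => rfl).symm
  all_goals
    intro x hx
    simp only [Finset.mem_filter, Finset.mem_Ioo, Finset.mem_Ico] at hx ⊢
    try simp only [abs_eq_max_neg] at hx ⊢
    omega

lemma p1_nonneg (t : ℝ) : 0 ≤ p1 t := (Real.exp_pos _).le

lemma p1_le_one (t : ℝ) : p1 t ≤ 1 :=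
  Real.exp_le_one_iff.2 (by have := pow_nonneg (sq_nonneg t) 2; linarith)

lemma p1_neg (t : ℝ) : p1 (-t) = p1 t := by simp [p1, Even.neg_pow (by decide : Even 4)]

lemma p1_antitoneOn : AntitoneOn p1 (Ici 0) := fun x hx y _ hxy =>
  Real.exp_le_exp.2 (by have := pow_le_pow_left₀ hx hxy 4; linarith)

lemma p1_monotoneOn : MonotoneOn p1 (Iic 0) := fun x hx y hy hxy => by
  rw [← p1_neg x, ← p1_neg y]
  exact p1_antitoneOn (neg_nonneg.2 (mem_Iic.1 hy)) (neg_nonneg.2 (mem_Iic.1 hx)) (neg_le_neg hxy)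

lemma p1_comp_monotoneOn {d s : ℝ} (hs : 0 < s) :
    MonotoneOn (fun x => p1 (d - s * x)) (Iic (d / s)) := fun x _ y hy hxy => by
  have hy' : s * y ≤ d := (le_div_iff₀' hs).1 hy
  exact p1_antitoneOn (mem_Ici.2 (by linarith)) (mem_Ici.2 (by nlinarith)) (by nlinarith)

lemma p1_comp_antitoneOn {d s : ℝ} (hs : 0 < s) :
    AntitoneOn (fun x => p1 (d - s * x)) (Ici (d / s)) := fun x hx y _ hxy => by
  have hx' : d ≤ s * x := (div_le_iff₀' hs).1 hx
  exact p1_monotoneOn (mem_Iic.2 (by nlinarith)) (mem_Iic.2 (by linarith)) (by nlinarith)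

lemma p1_continuous : Continuous p1 := by unfold p1; fun_prop

lemma p1_integrable : Integrable p1 := by
  refine ((integrable_exp_neg_mul_sq (b := 1 / 12) (by norm_num)).const_mul
    (Real.exp (1 / 24))).mono' p1_continuous.aestronglyMeasurable (ae_of_all _ fun t => ?_)
  rw [Real.norm_of_nonneg (p1_nonneg t), p1, ← Real.exp_add]
  exact Real.exp_le_exp.2 (by nlinarith [sq_nonneg (t ^ 2 - 1 / 2)])

lemma p1_le_mul_rpow_neg_four {t : ℝ} (ht : 0 < t) : p1 t ≤ 12 * t ^ (-4 : ℝ) := by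
  have hy : 0 < t ^ 4 / 12 := by positivity
  have hexp : t ^ 4 / 12 ≤ Real.exp (t ^ 4 / 12) := by
    linarith [Real.add_one_le_exp (t ^ 4 / 12)]
  calc p1 t = (Real.exp (t ^ 4 / 12))⁻¹ := by rw [p1, neg_div, Real.exp_neg]
    _ ≤ (t ^ 4 / 12)⁻¹ := inv_anti₀ hy hexp
    _ = 12 * t ^ (-4 : ℝ) := by
      rw [Real.rpow_neg ht.le, show (4 : ℝ) = (4 : ℕ) by norm_num, Real.rpow_natCast]
      field_simp

lemma setIntegral_Ioi_p1_le {T : ℝ} (hT : 0 < T) : ∫ t in Ioi T, p1 t ≤ 4 / T ^ 3 := by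
  have hint : IntegrableOn (fun t : ℝ => 12 * t ^ (-4 : ℝ)) (Ioi T) :=
    (integrableOn_Ioi_rpow_of_lt (by norm_num) hT).const_mul 12
  calc ∫ t in Ioi T, p1 t ≤ ∫ t in Ioi T, 12 * t ^ (-4 : ℝ) :=
        setIntegral_mono_on p1_integrable.integrableOn hint measurableSet_Ioi
          fun t ht => p1_le_mul_rpow_neg_four (hT.trans ht)
    _ = 4 / T ^ 3 := by
      rw [integral_const_mul, integral_Ioi_rpow_of_lt (by norm_num) hT]
      norm_num
      ring

lemma abs_integral_p1_sub_intervalIntegral_le {T u v : ℝ} (hT : 0 < T) (hu : u ≤ -T)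
    (hv : T ≤ v) : |(∫ t, p1 t) - ∫ t in u..v, p1 t| ≤ 8 / T ^ 3 := by
  have htails :
      (∫ t, p1 t) - ∫ t in u..v, p1 t = (∫ t in Ioi (-u), p1 t) + ∫ t in Ioi v, p1 t := by
    rw [← intervalIntegral.integral_Iic_sub_Iic p1_integrable.integrableOn
      p1_integrable.integrableOn, ← intervalIntegral.integral_Iic_add_Ioi
      p1_integrable.integrableOn p1_integrable.integrableOn (b := v), ← integral_comp_neg_Iic]
    simp only [p1_neg]
    ring
  have hnonneg (w : ℝ) : 0 ≤ ∫ t in Ioi w, p1 t :=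
    setIntegral_nonneg measurableSet_Ioi fun t _ => p1_nonneg t
  rw [htails, abs_of_nonneg (add_nonneg (hnonneg _) (hnonneg _))]
  calc _ ≤ 4 / (-u) ^ 3 + 4 / v ^ 3 :=
        add_le_add (setIntegral_Ioi_p1_le (by linarith)) (setIntegral_Ioi_p1_le (by linarith))
    _ ≤ 4 / T ^ 3 + 4 / T ^ 3 := by gcongr; linarith
    _ = 8 / T ^ 3 := by ring

lemma abs_sum_Ico_p1_comp_sub_integral_le {a b : ℕ} {d s T : ℝ} (hs : 0 < s) (hT : 0 < T)
    (hb : d - s * b ≤ -T) (ha : T ≤ d - s * a) :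
    |∑ m ∈ Finset.Ico a b, p1 (d - s * m) - s⁻¹ * ∫ t, p1 t| ≤ 3 + s⁻¹ * (8 / T ^ 3) := by
  have hriemann : |(∫ x in a..b, p1 (d - s * x)) - ∑ m ∈ Finset.Ico a b, p1 (d - s * m)| ≤ 3 * 1 :=
    abs_intervalIntegral_sub_sum_Ico_le_of_unimodal (p1_comp_monotoneOn hs)
      (p1_comp_antitoneOn hs) (fun _ => p1_nonneg _) (fun _ => p1_le_one _)
      (by rw [le_div_iff₀' hs]; linarith) (by rw [div_lt_iff₀' hs]; linarith)
  rw [intervalIntegral.integral_comp_sub_mul p1 hs.ne', smul_eq_mul] at hriemann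
  have htails :
      |s⁻¹ * (∫ t in d - s * b..d - s * a, p1 t) - s⁻¹ * ∫ t, p1 t| ≤ s⁻¹ * (8 / T ^ 3) := by
    rw [← mul_sub, abs_mul, abs_of_pos (inv_pos.2 hs), abs_sub_comm]
    exact mul_le_mul_of_nonneg_left (abs_integral_p1_sub_intervalIntegral_le hT hb ha)
      (inv_pos.2 hs).le
  calc _ ≤ _ := abs_sub_le _ (s⁻¹ * ∫ t in d - s * b..d - s * a, p1 t) _
    _ ≤ 3 * 1 + s⁻¹ * (8 / T ^ 3) := add_le_add (by rwa [abs_sub_comm]) htails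
    _ = _ := by ring

theorem riemann_sum_p1 :
    ∃ C : ℝ, 0 < C ∧ ∃ N : ℕ, ∀ n : ℕ, N ≤ n →
      |(∑ ℓ ∈ (Finset.Ioo (-(n : ℤ)) (n : ℤ)).filter
            (fun ℓ : ℤ => 2 * |ℓ| < (n : ℤ) ∧ ℓ % 2 = (n : ℤ) % 2),
          p1 ((ℓ : ℝ) / (n : ℝ) ^ ((3 : ℝ) / 4))) -
        ((n : ℝ) ^ ((3 : ℝ) / 4) / 2) * ∫ t : ℝ, p1 t| ≤ C * (n : ℝ) ^ ((1 : ℝ) / 12) := by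
  refine ⟨259, by norm_num, 8, fun n hn => ?_⟩
  set c : ℝ := (n : ℝ) ^ ((3 : ℝ) / 4)
  have hn8 : (8 : ℝ) ≤ n := by exact_mod_cast hn
  have hc : 0 < c := by positivity
  have hc4 : c ^ 4 = (n : ℝ) ^ 3 := by
    rw [← Real.rpow_natCast, ← Real.rpow_mul (by positivity)]
    norm_num
  have ha : 4 * ((n / 4 + 1 : ℕ) : ℝ) ≤ n + 4 := by
    exact_mod_cast (by omega : 4 * (n / 4 + 1) ≤ n + 4)
  have hb : 3 * (n : ℝ) ≤ 4 * ((3 * n + 3) / 4 : ℕ) := by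
    exact_mod_cast (by omega : 3 * n ≤ 4 * ((3 * n + 3) / 4))
  have hriemann := abs_sum_Ico_p1_comp_sub_integral_le (a := n / 4 + 1) (b := (3 * n + 3) / 4)
    (d := n / c) (s := 2 / c) (T := n / (4 * c)) (by positivity) (by positivity)
    (by field_simp; linarith) (by field_simp; linarith)
  have hpoint (m : ℕ) : (((n : ℤ) - 2 * m : ℤ) : ℝ) / c = n / c - 2 / c * m := by
    push_cast
    ring
  have hconst : (2 / c)⁻¹ * (8 / (n / (4 * c)) ^ 3) = 256 := by
    field_simp
    rw [hc4]
    ring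
  rw [sum_filter_parity_eq_sum_Ico n fun ℓ : ℤ => p1 (ℓ / c), ← inv_div 2 c]
  simp only [hpoint]
  calc _ ≤ 3 + 256 := hconst ▸ hriemann
    _ ≤ 259 * (n : ℝ) ^ ((1 : ℝ) / 12) := by
      linarith [Real.one_le_rpow (by linarith : (1 : ℝ) ≤ n) (by norm_num : (0 : ℝ) ≤ 1 / 12)]
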